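/- arXiv:2109.12034 — 2 statements merged into one kernel-verified Lean document; each statement's English description precedes it below -/
import Mathlib

section
/- q-Pfaff–Saalschütz formula: for a nonnegative integer m and indeterminates a, b, c, q, the sum over k from 0 to m of (a;q)_k (b;q)_k (q^{-m};q)_k q^k / ((q;q)_k (c;q)_k (abq^{1-m}/c;q)_k) equals (c/a;q)_m (c/b;q)_m / ((c;q)_m (c/(ab);q)_m), as an identity of rational functions in a, b, c, q. -/
open Finset

/-- The field of rational functions `ℚ(a,b,c,q)`. -/
noncomputable abbrev F : Type := FractionRing (MvPolynomial (Fin 4) ℚ)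

/-- The `q`-shifted factorial `(x; Q)_k = (1-x)(1-xQ)⋯(1-xQ^{k-1})`. -/
noncomputable def qPoch (x Q : F) (k : ℕ) : F :=
  ∏ i ∈ Finset.range k, (1 - x * Q ^ i)

lemma qPoch_zero (x Q : F) : qPoch x Q 0 = 1 := by simp [qPoch]

lemma qPoch_succ (x Q : F) (k : ℕ) :
    qPoch x Q (k+1) = qPoch x Q k * (1 - x * Q ^ k) := Finset.prod_range_succ _ _

lemma qPoch_ne_zero {x Q : F} {k : ℕ} (h : ∀ i < k, (1:F) - x * Q ^ i ≠ 0) :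
    qPoch x Q k ≠ 0 :=
  Finset.prod_ne_zero_iff.2 fun i hi => h i (Finset.mem_range.1 hi)

lemma qPoch_eq_zero {x Q : F} {k i : ℕ} (hi : i < k) (h : 1 - x * Q ^ i = 0) :
    qPoch x Q k = 0 :=
  Finset.prod_eq_zero (Finset.mem_range.2 hi) h

/-- The summand of the q-Pfaff-Saalschütz sum. -/
noncomputable def fs (a b c q : F) (m k : ℕ) : F :=
  qPoch a q k * qPoch b q k * qPoch ((q ^ m)⁻¹) q k * q ^ k /
    (qPoch q q k * qPoch c q k * qPoch (a * b * (q * (q ^ m)⁻¹) / c) q k)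

/-- The q-Zeilberger certificate function. -/
noncomputable def gs (a b c q : F) (m k : ℕ) : F :=
  q ^ m * (a * b - c * q ^ m) * (1 - q ^ k) * (q - c * q ^ k) *
      (qPoch a q k * qPoch b q k * qPoch ((q ^ (m+1))⁻¹) q k * q ^ k) /
    ((q ^ m * q - 1) * q ^ k *
      (qPoch q q k * qPoch c q k * qPoch (a * b * (q * (q ^ (m+1))⁻¹) / c) q k))

/-- The closed form (right-hand side). -/
noncomputable def rh (a b c q : F) (m : ℕ) : F :=
  qPoch (c / a) q m * qPoch (c / b) q m / (qPoch c q m * qPoch (c / (a * b)) q m)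

lemma e_factor_ne (a b c q : F) (hc0 : c ≠ 0) (hq0 : q ≠ 0)
    (Hab : ∀ s t : ℕ, c * q ^ s ≠ a * b * q ^ t) (s i : ℕ) :
    (1:F) - a * b * (q * (q ^ s)⁻¹) / c * q ^ i ≠ 0 := by
  rw [sub_ne_zero]
  intro h
  apply Hab s (i+1)
  have hx : (q:F) ^ s ≠ 0 := pow_ne_zero _ hq0
  field_simp at h
  linear_combination h

lemma cab_factor_ne (a b c q : F) (ha0 : a ≠ 0) (hb0 : b ≠ 0)
    (Hab : ∀ s t : ℕ, c * q ^ s ≠ a * b * q ^ t) (i : ℕ) :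
    (1:F) - c / (a * b) * q ^ i ≠ 0 := by
  rw [sub_ne_zero]
  intro h
  apply Hab i 0
  field_simp at h
  linear_combination -h

lemma poch_inv_shift (q : F) (hq0 : q ≠ 0) (m k : ℕ) :
    (q ^ m * q - 1) * qPoch ((q ^ m)⁻¹) q k
      = (q ^ m * q - q ^ k) * qPoch ((q ^ (m+1))⁻¹) q k := by
  induction k with
  | zero => rw [qPoch_zero, qPoch_zero, pow_zero]
  | succ k ih =>
    rw [qPoch_succ, qPoch_succ]
    have hs : (q ^ m * q - q ^ (k+1)) * (1 - (q ^ (m+1))⁻¹ * q ^ k)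
        = (q ^ m * q - q ^ k) * (1 - (q ^ m)⁻¹ * q ^ k) := by
      field_simp
      ring
    calc (q ^ m * q - 1) * (qPoch ((q ^ m)⁻¹) q k * (1 - (q ^ m)⁻¹ * q ^ k))
        = ((q ^ m * q - 1) * qPoch ((q ^ m)⁻¹) q k) * (1 - (q ^ m)⁻¹ * q ^ k) := by ring
      _ = ((q ^ m * q - q ^ k) * qPoch ((q ^ (m+1))⁻¹) q k) * (1 - (q ^ m)⁻¹ * q ^ k) := by
            rw [ih]
      _ = _ := by linear_combination (-qPoch ((q ^ (m+1))⁻¹) q k) * hs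

lemma poch_ab_shift (a b c q : F) (hc0 : c ≠ 0)
    (hq0 : q ≠ 0) (m k : ℕ) :
    (c * q ^ m - a * b) * qPoch (a * b * (q * (q ^ m)⁻¹) / c) q k
      = (c * q ^ m - a * b * q ^ k) * qPoch (a * b * (q * (q ^ (m+1))⁻¹) / c) q k := by
  induction k with
  | zero => rw [qPoch_zero, qPoch_zero, pow_zero]; ring
  | succ k ih =>
    rw [qPoch_succ, qPoch_succ]
    have hs : (c * q ^ m - a * b * q ^ (k+1)) * (1 - a * b * (q * (q ^ (m+1))⁻¹) / c * q ^ k)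
        = (c * q ^ m - a * b * q ^ k) * (1 - a * b * (q * (q ^ m)⁻¹) / c * q ^ k) := by
      field_simp
      ring
    calc (c * q ^ m - a * b) * (qPoch (a * b * (q * (q ^ m)⁻¹) / c) q k
            * (1 - a * b * (q * (q ^ m)⁻¹) / c * q ^ k))
        = ((c * q ^ m - a * b) * qPoch (a * b * (q * (q ^ m)⁻¹) / c) q k)
            * (1 - a * b * (q * (q ^ m)⁻¹) / c * q ^ k) := by ring
      _ = ((c * q ^ m - a * b * q ^ k) * qPoch (a * b * (q * (q ^ (m+1))⁻¹) / c) q k)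
            * (1 - a * b * (q * (q ^ m)⁻¹) / c * q ^ k) := by rw [ih]
      _ = _ := by
            linear_combination (-qPoch (a * b * (q * (q ^ (m+1))⁻¹) / c) q k) * hs

lemma frac_lin (α β N1 D1 N2 D2 N3 D3 N4 D4 : F)
    (h1 : D1 ≠ 0) (h2 : D2 ≠ 0) (h3 : D3 ≠ 0) (h4 : D4 ≠ 0)
    (hkey : α * N1 * (D2 * D3 * D4) - β * N2 * (D1 * D3 * D4)
        = N3 * (D1 * D2 * D4) - N4 * (D1 * D2 * D3)) :
    α * (N1 / D1) - β * (N2 / D2) = N3 / D3 - N4 / D4 := by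
  field_simp
  linear_combination hkey
section CertSection
variable (a b c q : F) (ha0 : a ≠ 0) (hb0 : b ≠ 0) (hc0 : c ≠ 0) (hq0 : q ≠ 0)
  (Hq : ∀ n : ℕ, q * q ^ n ≠ 1) (Hc : ∀ n : ℕ, c * q ^ n ≠ 1)
  (Hab : ∀ s t : ℕ, c * q ^ s ≠ a * b * q ^ t)

include ha0 hb0 hc0 hq0 Hq Hc Hab in
lemma cert (m k : ℕ) :
    (1 - c * q ^ m) * (a * b - c * q ^ m) * fs a b c q (m+1) k
      - (a - c * q ^ m) * (b - c * q ^ m) * fs a b c q m k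
    = gs a b c q m (k+1) - gs a b c q m k := by
  have hPq : qPoch q q k ≠ 0 := qPoch_ne_zero fun i _ => sub_ne_zero.2 (Ne.symm (Hq i))
  have hPC : qPoch c q k ≠ 0 := qPoch_ne_zero fun i _ => sub_ne_zero.2 (Ne.symm (Hc i))
  have hPe1 : qPoch (a * b * (q * (q ^ (m+1))⁻¹) / c) q k ≠ 0 :=
    qPoch_ne_zero fun i _ => e_factor_ne a b c q hc0 hq0 Hab (m+1) i
  have hPe0 : qPoch (a * b * (q * (q ^ m)⁻¹) / c) q k ≠ 0 :=
    qPoch_ne_zero fun i _ => e_factor_ne a b c q hc0 hq0 Hab m i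
  have hv : (q:F) ^ k ≠ 0 := pow_ne_zero _ hq0
  have hv1 : (q:F) ^ (k+1) ≠ 0 := pow_ne_zero _ hq0
  have hxq1 : q ^ m * q - 1 ≠ 0 := sub_ne_zero.2 fun h => Hq m (by rw [← h]; ring)
  have hcu_ab : c * q ^ m - a * b ≠ 0 := sub_ne_zero.2 (by simpa using Hab m 0)
  have hcu_abv : c * q ^ m - a * b * q ^ k ≠ 0 := sub_ne_zero.2 (Hab m k)
  have hcuq_abvq : c * q ^ m * q - a * b * q ^ (k+1) ≠ 0 := by
    have h := Hab (m+1) (k+1)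
    rw [pow_succ] at h
    exact sub_ne_zero.2 (by rw [← mul_assoc] at h; exact h)
  have h1mq : (1:F) - q * q ^ k ≠ 0 := sub_ne_zero.2 (Ne.symm (Hq k))
  have h1mc : (1:F) - c * q ^ k ≠ 0 := sub_ne_zero.2 (Ne.symm (Hc k))
  have hC3 := poch_inv_shift q hq0 m k
  have hE3 := poch_ab_shift a b c q hc0 hq0 m k
  have hfsm : fs a b c q m k
      = qPoch a q k * qPoch b q k * ((q ^ m * q - q ^ k) * qPoch ((q ^ (m+1))⁻¹) q k)
          * q ^ k * (c * q ^ m - a * b) /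
        (qPoch q q k * qPoch c q k
          * ((c * q ^ m - a * b * q ^ k) * qPoch (a * b * (q * (q ^ (m+1))⁻¹) / c) q k)
          * (q ^ m * q - 1)) := by
    rw [fs, div_eq_div_iff (by apply_rules [mul_ne_zero]) (by apply_rules [mul_ne_zero])]
    linear_combination (qPoch a q k * qPoch b q k * q ^ k * qPoch q q k * qPoch c q k
        * (c * q ^ m - a * b * q ^ k) * qPoch (a * b * (q * (q ^ (m+1))⁻¹) / c) q k) * hC3
      - (qPoch a q k * qPoch b q k * q ^ k * qPoch q q k * qPoch c q k
        * (q ^ m * q - q ^ k) * qPoch ((q ^ (m+1))⁻¹) q k) * hE3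
  have hgs : gs a b c q m (k+1)
      = q ^ m * (a * b - c * q ^ m) * (1 - q ^ (k+1)) * (q - c * q ^ (k+1)) *
          ((qPoch a q k * (1 - a * q ^ k)) * (qPoch b q k * (1 - b * q ^ k))
            * ((q ^ m * q - q ^ k) * qPoch ((q ^ (m+1))⁻¹) q k) * q ^ (k+1)) * c /
        ((q ^ m * q - 1) * q ^ (k+1) *
          ((qPoch q q k * (1 - q * q ^ k)) * (qPoch c q k * (1 - c * q ^ k))
            * ((c * q ^ m * q - a * b * q ^ (k+1))
                * qPoch (a * b * (q * (q ^ (m+1))⁻¹) / c) q k))) := by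
    have hbin : (1:F) - a * b * (q * (q ^ (m+1))⁻¹) / c * q ^ k ≠ 0 :=
      e_factor_ne a b c q hc0 hq0 Hab (m+1) k
    rw [gs, qPoch_succ, qPoch_succ, qPoch_succ, qPoch_succ, qPoch_succ, qPoch_succ,
      div_eq_div_iff (by apply_rules [mul_ne_zero]) (by apply_rules [mul_ne_zero])]
    have hx : (q ^ (m+1))⁻¹ * (q ^ m * q) = 1 := by
      rw [← pow_succ]; exact inv_mul_cancel₀ (pow_ne_zero _ hq0)
    have hy : a * b * (q * (q ^ (m+1))⁻¹) / c * c = a * b * q * (q ^ (m+1))⁻¹ := by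
      rw [div_mul_cancel₀ _ hc0]; ring
    linear_combination (q ^ m * (a * b - c * q ^ m) * (1 - q ^ (k+1)) * (q - c * q ^ (k+1))
        * qPoch a q k * (1 - a * q ^ k) * qPoch b q k * (1 - b * q ^ k) * qPoch ((q ^ (m+1))⁻¹) q k
        * q ^ (k+1) * (q ^ m * q - 1) * q ^ (k+1) * qPoch q q k * (1 - q * q ^ k) * qPoch c q k
        * (1 - c * q ^ k) * qPoch (a * b * (q * (q ^ (m+1))⁻¹) / c) q k)
        * ((a * b * q ^ (k+1) - c * q ^ k) * hx + (q ^ m * q - q ^ k) * q ^ k * hy)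
  rw [hfsm, hgs, fs, gs]
  exact frac_lin _ _ _ _ _ _ _ _ _ _
    (by apply_rules [mul_ne_zero]) (by apply_rules [mul_ne_zero]) (by apply_rules [mul_ne_zero]) (by apply_rules [mul_ne_zero]) (by ring)

end CertSection

lemma fs_eq_zero (a b c q : F) (hq0 : q ≠ 0) {m k : ℕ} (h : m < k) :
    fs a b c q m k = 0 := by
  have h0 : (1:F) - (q ^ m)⁻¹ * q ^ m = 0 := by
    rw [inv_mul_cancel₀ (pow_ne_zero _ hq0), sub_self]
  rw [fs, qPoch_eq_zero h h0]
  simp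

lemma gs_zero (a b c q : F) (m : ℕ) : gs a b c q m 0 = 0 := by
  simp [gs]

lemma gs_top (a b c q : F) (hq0 : q ≠ 0) (m : ℕ) : gs a b c q m (m+2) = 0 := by
  have h0 : (1:F) - (q ^ (m+1))⁻¹ * q ^ (m+1) = 0 := by
    rw [inv_mul_cancel₀ (pow_ne_zero _ hq0), sub_self]
  rw [gs, qPoch_eq_zero (show m+1 < m+2 by omega) h0]
  simp

section MainSection
variable (a b c q : F) (ha0 : a ≠ 0) (hb0 : b ≠ 0) (hc0 : c ≠ 0) (hq0 : q ≠ 0)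
  (Hq : ∀ n : ℕ, q * q ^ n ≠ 1) (Hc : ∀ n : ℕ, c * q ^ n ≠ 1)
  (Hab : ∀ s t : ℕ, c * q ^ s ≠ a * b * q ^ t)

include ha0 hb0 hc0 hq0 Hq Hc Hab in
lemma sum_rec (m : ℕ) :
    (1 - c * q ^ m) * (a * b - c * q ^ m) * ∑ k ∈ Finset.range (m+2), fs a b c q (m+1) k
      = (a - c * q ^ m) * (b - c * q ^ m) * ∑ k ∈ Finset.range (m+1), fs a b c q m k := by
  have h1 : ∑ k ∈ Finset.range (m+2),
      ((1 - c * q ^ m) * (a * b - c * q ^ m) * fs a b c q (m+1) k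
        - (a - c * q ^ m) * (b - c * q ^ m) * fs a b c q m k)
      = gs a b c q m (m+2) - gs a b c q m 0 := by
    rw [← Finset.sum_range_sub (gs a b c q m)]
    exact Finset.sum_congr rfl fun k _ => cert a b c q ha0 hb0 hc0 hq0 Hq Hc Hab m k
  rw [gs_top a b c q hq0, gs_zero, sub_zero, Finset.sum_sub_distrib,
    ← Finset.mul_sum, ← Finset.mul_sum] at h1
  have h2 : ∑ k ∈ Finset.range (m+2), fs a b c q m k
      = ∑ k ∈ Finset.range (m+1), fs a b c q m k := by
    rw [Finset.sum_range_succ, fs_eq_zero a b c q hq0 (by omega), add_zero]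
  rw [h2] at h1
  linear_combination h1

include ha0 hb0 hc0 hq0 Hq Hc Hab in
lemma rh_rec (m : ℕ) :
    (1 - c * q ^ m) * (a * b - c * q ^ m) * rh a b c q (m+1)
      = (a - c * q ^ m) * (b - c * q ^ m) * rh a b c q m := by
  have hPC : qPoch c q m ≠ 0 := qPoch_ne_zero fun i _ => sub_ne_zero.2 (Ne.symm (Hc i))
  have hPcab : qPoch (c / (a * b)) q m ≠ 0 :=
    qPoch_ne_zero fun i _ => cab_factor_ne a b c q ha0 hb0 Hab i
  have h1mc : (1:F) - c * q ^ m ≠ 0 := sub_ne_zero.2 (Ne.symm (Hc m))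
  have h1mcab : (1:F) - c / (a * b) * q ^ m ≠ 0 := cab_factor_ne a b c q ha0 hb0 Hab m
  rw [rh, rh, qPoch_succ, qPoch_succ, qPoch_succ, qPoch_succ,
    ← mul_div_assoc, ← mul_div_assoc,
    div_eq_div_iff (by apply_rules [mul_ne_zero]) (by apply_rules [mul_ne_zero])]
  field_simp

include ha0 hb0 hc0 hq0 Hq Hc Hab in
lemma main_id (m : ℕ) :
    ∑ k ∈ Finset.range (m+1), fs a b c q m k = rh a b c q m := by
  induction m with
  | zero => simp [fs, rh, qPoch_zero]
  | succ m ih =>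
    have hden : (1 - c * q ^ m) * (a * b - c * q ^ m) ≠ 0 := by
      refine mul_ne_zero (sub_ne_zero.2 (Ne.symm (Hc m))) (sub_ne_zero.2 ?_)
      intro h
      exact Hab m 0 (by rw [pow_zero, mul_one]; exact h.symm)
    apply mul_left_cancel₀ hden
    calc (1 - c * q ^ m) * (a * b - c * q ^ m) * ∑ k ∈ Finset.range (m+1+1), fs a b c q (m+1) k
        = (a - c * q ^ m) * (b - c * q ^ m) * ∑ k ∈ Finset.range (m+1), fs a b c q m k :=
          sum_rec a b c q ha0 hb0 hc0 hq0 Hq Hc Hab m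
      _ = (a - c * q ^ m) * (b - c * q ^ m) * rh a b c q m := by rw [ih]
      _ = (1 - c * q ^ m) * (a * b - c * q ^ m) * rh a b c q (m+1) :=
          (rh_rec a b c q ha0 hb0 hc0 hq0 Hq Hc Hab m).symm

end MainSection

/-- The `q`-Pfaff–Saalschütz summation formula, as an identity of rational
functions in `a, b, c, q`. -/
theorem stmt_11 (m : ℕ) (a b c q : F)
    (ha : a = algebraMap (MvPolynomial (Fin 4) ℚ) F (MvPolynomial.X 0))
    (hb : b = algebraMap (MvPolynomial (Fin 4) ℚ) F (MvPolynomial.X 1))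
    (hc : c = algebraMap (MvPolynomial (Fin 4) ℚ) F (MvPolynomial.X 2))
    (hq : q = algebraMap (MvPolynomial (Fin 4) ℚ) F (MvPolynomial.X 3)) :
    (∑ k ∈ Finset.range (m + 1),
      qPoch a q k * qPoch b q k * qPoch (q ^ (-(m : ℤ))) q k * q ^ k /
        (qPoch q q k * qPoch c q k * qPoch (a * b * q ^ (1 - (m : ℤ)) / c) q k)) =
    qPoch (c / a) q m * qPoch (c / b) q m / (qPoch c q m * qPoch (c / (a * b)) q m) := by
  have inj : Function.Injective (algebraMap (MvPolynomial (Fin 4) ℚ) F) :=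
    IsFractionRing.injective _ _
  have hXne : ∀ i : Fin 4, algebraMap (MvPolynomial (Fin 4) ℚ) F (MvPolynomial.X i) ≠ 0 := by
    intro i h
    have h2 : (MvPolynomial.X i : MvPolynomial (Fin 4) ℚ) = 0 := inj (by rw [h, map_zero])
    exact MvPolynomial.X_ne_zero i h2
  have ha0 : a ≠ 0 := by rw [ha]; exact hXne 0
  have hb0 : b ≠ 0 := by rw [hb]; exact hXne 1
  have hc0 : c ≠ 0 := by rw [hc]; exact hXne 2
  have hq0 : q ≠ 0 := by rw [hq]; exact hXne 3
  have Hq : ∀ n : ℕ, q * q ^ n ≠ 1 := by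
    intro n h
    rw [hq, ← map_pow, ← map_mul, ← map_one (algebraMap (MvPolynomial (Fin 4) ℚ) F)] at h
    have h2 := inj h
    have h3 := congrArg (MvPolynomial.eval (fun _ => (2:ℚ))) h2
    simp at h3
    have h4 : (1:ℚ) ≤ 2 ^ n := one_le_pow₀ (by norm_num)
    nlinarith
  have Hc : ∀ n : ℕ, c * q ^ n ≠ 1 := by
    intro n h
    rw [hq, hc, ← map_pow, ← map_mul, ← map_one (algebraMap (MvPolynomial (Fin 4) ℚ) F)] at h
    have h2 := inj h
    have h3 := congrArg (MvPolynomial.eval (fun i => if i = 2 then (5:ℚ) else 1)) h2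
    simp at h3
  have Hab : ∀ s t : ℕ, c * q ^ s ≠ a * b * q ^ t := by
    intro s t h
    rw [hq, hc, ha, hb, ← map_pow, ← map_mul, ← map_pow, ← map_mul, ← map_mul] at h
    have h2 := inj h
    have h3 := congrArg
      (MvPolynomial.eval (fun i => if i = 2 then (5:ℚ) else if i = 3 then 1 else 2)) h2
    simp at h3
    norm_num at h3
  have hz1 : q ^ (-(m : ℤ)) = ((q ^ m)⁻¹ : F) := by rw [zpow_neg, zpow_natCast]
  have hz2 : q ^ (1 - (m : ℤ)) = q * (q ^ m)⁻¹ := by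
    rw [sub_eq_add_neg, zpow_add₀ hq0, zpow_one, zpow_neg, zpow_natCast]
  calc (∑ k ∈ Finset.range (m + 1),
      qPoch a q k * qPoch b q k * qPoch (q ^ (-(m : ℤ))) q k * q ^ k /
        (qPoch q q k * qPoch c q k * qPoch (a * b * q ^ (1 - (m : ℤ)) / c) q k))
      = ∑ k ∈ Finset.range (m + 1), fs a b c q m k := by
        refine Finset.sum_congr rfl fun k _ => ?_
        rw [hz1, hz2, fs]
    _ = rh a b c q m := main_id a b c q ha0 hb0 hc0 hq0 Hq Hc Hab m
    _ = _ := by rw [rh]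
end

section
/- Let n be a positive odd integer with n ≡ 1 (mod 4). Then (1-q^n)^2 * ( sum over j from 1 to (n-1)/4 of q^{4j}/(1-q^{4j})^2 minus sum over j from 0 to (n-1)/4 - 1 of q^{4j+2}/(1-q^{4j+2})^2 ) is congruent to 0 modulo Φ_n(q)^2, as rational functions in q. -/
open Finset Polynomial

/-- The indeterminate `q` in the field of rational functions `ℚ(q)`. -/
noncomputable def q : RatFunc ℚ := RatFunc.X

namespace Stmt12Aux

noncomputable abbrev alg : ℚ[X] →+* RatFunc ℚ := algebraMap ℚ[X] (RatFunc ℚ)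

lemma q_pow (k : ℕ) : q ^ k = alg (X ^ k) := by
  simp [q, map_pow, RatFunc.algebraMap_X]

lemma one_sub_q_pow (k : ℕ) : 1 - q ^ k = alg (1 - X ^ k) := by
  simp [q_pow, map_sub, map_one]

lemma poly_ne (k : ℕ) (hk : 0 < k) : (1 - X ^ k : ℚ[X]) ≠ 0 := by
  intro h
  have h2 := congrArg (Polynomial.eval 0) h
  simp [zero_pow hk.ne'] at h2

lemma cyc_not_dvd (n k : ℕ) (hn : 0 < n) (hk : 0 < k) (hkn : k < n) :
    ¬ (cyclotomic n ℚ ∣ (1 - X ^ k)) := by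
  intro h
  have h' : cyclotomic n ℂ ∣ (1 - X ^ k) := by
    have hm := Polynomial.map_dvd (algebraMap ℚ ℂ) h
    simpa [Polynomial.map_cyclotomic, Polynomial.map_sub, Polynomial.map_pow] using hm
  set ζ := Complex.exp (2 * Real.pi * Complex.I / n) with hζdef
  have hζ : IsPrimitiveRoot ζ n := Complex.isPrimitiveRoot_exp n hn.ne'
  have hroot : (cyclotomic n ℂ).IsRoot ζ := hζ.isRoot_cyclotomic hn
  obtain ⟨c, hc⟩ := h'
  have hz : (1 : ℂ) - ζ ^ k = 0 := by
    have he := congrArg (Polynomial.eval ζ) hc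
    simpa [Polynomial.IsRoot.def.mp hroot] using he
  have hpow : ζ ^ k = 1 := (sub_eq_zero.mp hz).symm
  have hdvd : n ∣ k := hζ.dvd_of_pow_eq_one k hpow
  have := Nat.le_of_dvd hk hdvd
  omega

end Stmt12Aux

open Stmt12Aux in
/-- For odd `n ≡ 1 (mod 4)`,
`(1-q^n)^2 (∑_{j=1}^{(n-1)/4} q^{4j}/(1-q^{4j})^2 - ∑_{j=0}^{(n-1)/4-1} q^{4j+2}/(1-q^{4j+2})^2)`
is congruent to `0` modulo `Φ_n(q)^2`. -/
theorem stmt_12 (n : ℕ) (hn : 0 < n) (hodd : Odd n) (h4 : n % 4 = 1) :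
    ((cyclotomic n ℚ) ^ 2) ∣
      ((1 - q ^ n) ^ 2 *
        ((∑ j ∈ Finset.Icc 1 ((n - 1) / 4), q ^ (4 * j) / (1 - q ^ (4 * j)) ^ 2) -
          ∑ j ∈ Finset.range ((n - 1) / 4), q ^ (4 * j + 2) / (1 - q ^ (4 * j + 2)) ^ 2)).num := by
  have hm4 : 4 * ((n - 1) / 4) = n - 1 := by omega
  set m := (n - 1) / 4 with hmdef
  set Φ : ℚ[X] := cyclotomic n ℚ with hΦ
  have hΦprime : Prime Φ := (cyclotomic.irreducible_rat hn).prime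
  set A : ℕ → ℚ[X] := fun j => (1 - X ^ (4 * j)) ^ 2 with hA
  set B : ℕ → ℚ[X] := fun j => (1 - X ^ (4 * j + 2)) ^ 2 with hB
  set D : ℚ[X] := (∏ j ∈ Icc 1 m, A j) * ∏ j ∈ range m, B j with hD
  have hbA : ∀ j ∈ Icc 1 m, 0 < 4 * j ∧ 4 * j < n := by
    intro j hj; rw [Finset.mem_Icc] at hj; omega
  have hbB : ∀ j ∈ Finset.range m, 0 < 4 * j + 2 ∧ 4 * j + 2 < n := by
    intro j hj; rw [Finset.mem_range] at hj; omega
  have hAne : ∀ j ∈ Icc 1 m, A j ≠ 0 := fun j hj =>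
    pow_ne_zero 2 (poly_ne _ (hbA j hj).1)
  have hBne : ∀ j ∈ Finset.range m, B j ≠ 0 := fun j hj =>
    pow_ne_zero 2 (poly_ne _ (hbB j hj).1)
  have hDne : D ≠ 0 :=
    mul_ne_zero (Finset.prod_ne_zero_iff.mpr hAne) (Finset.prod_ne_zero_iff.mpr hBne)
  -- clear denominators in the first sum
  have hS1 : (∑ j ∈ Icc 1 m, q ^ (4 * j) / (1 - q ^ (4 * j)) ^ 2) * alg D
      = alg (∑ j ∈ Icc 1 m,
          X ^ (4 * j) * ((∏ i ∈ (Icc 1 m).erase j, A i) * ∏ i ∈ range m, B i)) := by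
    rw [map_sum, Finset.sum_mul]
    refine Finset.sum_congr rfl fun j hj => ?_
    have hterm : q ^ (4 * j) / (1 - q ^ (4 * j)) ^ 2 = alg (X ^ (4 * j)) / alg (A j) := by
      simp only [q_pow, hA, map_pow, map_sub, map_one]
    have hDfac : D = A j * ((∏ i ∈ (Icc 1 m).erase j, A i) * ∏ i ∈ range m, B i) := by
      rw [hD, ← Finset.mul_prod_erase _ _ hj, mul_assoc]
    have hAj : alg (A j) ≠ 0 := RatFunc.algebraMap_ne_zero (hAne j hj)
    rw [hterm, hDfac, map_mul, map_mul, map_mul]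
    field_simp
    simp only [map_mul]
    ring
  -- clear denominators in the second sum
  have hS2 : (∑ j ∈ range m, q ^ (4 * j + 2) / (1 - q ^ (4 * j + 2)) ^ 2) * alg D
      = alg (∑ j ∈ range m,
          X ^ (4 * j + 2) * ((∏ i ∈ Icc 1 m, A i) * ∏ i ∈ (range m).erase j, B i)) := by
    rw [map_sum, Finset.sum_mul]
    refine Finset.sum_congr rfl fun j hj => ?_
    have hterm : q ^ (4 * j + 2) / (1 - q ^ (4 * j + 2)) ^ 2
        = alg (X ^ (4 * j + 2)) / alg (B j) := by
      simp only [q_pow, hB, map_pow, map_sub, map_one]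
    have hDfac : D = B j * ((∏ i ∈ Icc 1 m, A i) * ∏ i ∈ (range m).erase j, B i) := by
      rw [hD, ← Finset.mul_prod_erase _ _ hj]; ring
    have hBj : alg (B j) ≠ 0 := RatFunc.algebraMap_ne_zero (hBne j hj)
    rw [hterm, hDfac, map_mul, map_mul, map_mul]
    field_simp
    simp only [map_mul]
    ring
  set N1 : ℚ[X] := ∑ j ∈ Icc 1 m,
      X ^ (4 * j) * ((∏ i ∈ (Icc 1 m).erase j, A i) * ∏ i ∈ range m, B i) with hN1
  set N2 : ℚ[X] := ∑ j ∈ range m,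
      X ^ (4 * j + 2) * ((∏ i ∈ Icc 1 m, A i) * ∏ i ∈ (range m).erase j, B i) with hN2
  set P : ℚ[X] := (1 - X ^ n) ^ 2 * (N1 - N2) with hP
  set F : RatFunc ℚ := (1 - q ^ n) ^ 2 *
        ((∑ j ∈ Finset.Icc 1 m, q ^ (4 * j) / (1 - q ^ (4 * j)) ^ 2) -
          ∑ j ∈ Finset.range m, q ^ (4 * j + 2) / (1 - q ^ (4 * j + 2)) ^ 2) with hF
  have key : F * alg D = alg P := by
    have h1 : F * alg D = (1 - q ^ n) ^ 2 *
        (((∑ j ∈ Finset.Icc 1 m, q ^ (4 * j) / (1 - q ^ (4 * j)) ^ 2) * alg D) -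
          (∑ j ∈ Finset.range m, q ^ (4 * j + 2) / (1 - q ^ (4 * j + 2)) ^ 2) * alg D) := by
      rw [hF]; ring
    rw [h1, hS1, hS2, ← map_sub, one_sub_q_pow, ← map_pow, ← map_mul, hP, hN1, hN2]
  -- cross multiply to the numerator
  have hdenne : alg F.denom ≠ 0 := RatFunc.algebraMap_ne_zero (RatFunc.denom_ne_zero F)
  have hnumeq : alg F.num = F * alg F.denom :=
    (div_eq_iff hdenne).mp (RatFunc.num_div_denom F)
  have hcross : F.num * D = P * F.denom := by
    apply RatFunc.algebraMap_injective ℚ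
    have e1 : alg (F.num * D) = alg F.num * alg D := map_mul alg _ _
    have e2 : alg (P * F.denom) = alg P * alg F.denom := map_mul alg _ _
    rw [e1, e2, hnumeq, mul_right_comm, key]
  -- Φ² divides P
  have hΦdvd1 : Φ ∣ (1 - X ^ n : ℚ[X]) := by
    have h1 : Φ ∣ (X ^ n - 1 : ℚ[X]) := cyclotomic.dvd_X_pow_sub_one n ℚ
    have h2 : (1 - X ^ n : ℚ[X]) = -(X ^ n - 1) := by ring
    rw [h2]; exact h1.neg_right
  have hΦ2P : Φ ^ 2 ∣ P := by
    rw [hP]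
    exact Dvd.dvd.mul_right (pow_dvd_pow_of_dvd hΦdvd1 2) _
  have hΦ2 : Φ ^ 2 ∣ F.num * D := by
    rw [hcross]
    exact hΦ2P.mul_right _
  -- Φ does not divide D
  have hΦnD : ¬ Φ ∣ D := by
    intro h
    rcases hΦprime.dvd_mul.mp h with h' | h'
    · obtain ⟨j, hj, hdj⟩ := hΦprime.exists_mem_finset_dvd h'
      exact cyc_not_dvd n (4 * j) hn (hbA j hj).1 (hbA j hj).2 (hΦprime.dvd_of_dvd_pow hdj)
    · obtain ⟨j, hj, hdj⟩ := hΦprime.exists_mem_finset_dvd h'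
      exact cyc_not_dvd n (4 * j + 2) hn (hbB j hj).1 (hbB j hj).2 (hΦprime.dvd_of_dvd_pow hdj)
  exact hΦprime.pow_dvd_of_dvd_mul_right 2 hΦnD hΦ2
end
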